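/- Let k ≥ 1 and let M_N be a random tensor satisfying Hypothesis (TensorModel) with parameter (c,c'). Set S_{2,N} = ((2k)!·k!·c)^{-1/2} · Σ_{σ ∈ S_{2k}} sgn(σ)·M_{N,σ}. Then for all η, η' ∈ S_k, Φ_N(S_{2,N}·U_{N,η}·S_{2,N}^*·U_{N,η'}^*) converges to sgn(η)·sgn(η')/k! as N → ∞. -/

import Mathlib

open Filter Matrix

noncomputable section

/-- Glue two `k`-tuples of indices into a `2k`-tuple: positions `0,…,k-1` come from the
row index `i`, positions `k,…,2k-1` come from the column index `j`. -/
def glueIdx (k N : ℕ) (i j : Fin k → Fin N) : Fin (2 * k) → Fin N :=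
  fun s => if h : (s : ℕ) < k then i ⟨s, h⟩ else j ⟨(s : ℕ) - k, by have := s.isLt; omega⟩

/-- The flattening `M_{N,σ}` of a tensor `M ∈ (ℂ^N)^{⊗2k}`: the entry at row `i`
and column `j` is `M(x_{σ⁻¹(1)}, …, x_{σ⁻¹(2k)})` where `(x_1,…,x_{2k}) = (i, j)`. -/
def flatten (k N : ℕ) (M : (Fin (2 * k) → Fin N) → ℂ) (σ : Equiv.Perm (Fin (2 * k))) :
    Matrix (Fin k → Fin N) (Fin k → Fin N) ℂ :=
  fun i j => M fun s => glueIdx k N i j (σ.symm s)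

/-- The matrix `U_{N,η}` permuting the tensor factors of `(ℂ^N)^{⊗k}`:
`U_{N,η}(i,j) = ∏_s δ_{i_s, j_{η(s)}}`. -/
def Umat (k N : ℕ) (η : Equiv.Perm (Fin k)) :
    Matrix (Fin k → Fin N) (Fin k → Fin N) ℂ :=
  fun i j => if ∀ s, i s = j (η s) then 1 else 0

/-- `Φ_N(A) = E[N^{-k} · Tr A]` for a random `N^k × N^k` matrix `A`. -/
def Phi (k N : ℕ) {Ω : Type*} [MeasurableSpace Ω] (μ : MeasureTheory.Measure Ω)
    (A : Ω → Matrix (Fin k → Fin N) (Fin k → Fin N) ℂ) : ℂ :=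
  ∫ ω, ((N : ℂ) ^ k)⁻¹ * (A ω).trace ∂μ

/-- `Fin k ⊕ Fin k ≃ Fin (2k)`: the first summand goes to `0,…,k-1`, the second to
`k,…,2k-1`. -/
def finSumEquiv (k : ℕ) : (Fin k ⊕ Fin k) ≃ Fin (2 * k) :=
  finSumFinEquiv.trans (finCongr (by omega))

/-- The permutation `η ⊔ η'` of `{1,…,2k}` acting as `η` on the first `k` elements and as
`η'` on the last `k` elements. -/
def gluePerm (k : ℕ) (η η' : Equiv.Perm (Fin k)) : Equiv.Perm (Fin (2 * k)) :=
  (finSumEquiv k).permCongr (Equiv.sumCongr η η')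

/-- The involution `τ ∈ S_{2k}` swapping the first and the last `k` elements. -/
def tauPerm (k : ℕ) : Equiv.Perm (Fin (2 * k)) :=
  (finSumEquiv k).permCongr (Equiv.sumComm (Fin k) (Fin k))

/-- Hypothesis (TensorModel) with parameter `(c, c')`: for each `N`, a random tensor in
`(ℂ^N)^{⊗2k}` whose entries are i.i.d. copies of a centered complex random variable `m_N`
(of law `ν N`) having finite moments of all orders, with `N^k·E[|m_N|²] → c > 0`,
`N^k·E[m_N²] → c'`, and `N^k·E[m_N^{ℓ₁}·conj(m_N)^{ℓ₂}] → 0` whenever `ℓ₁ + ℓ₂ > 2`. -/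
structure TensorModel (k : ℕ) (c : ℝ) (c' : ℂ) where
  Ω : ℕ → Type
  [mΩ : ∀ N, MeasurableSpace (Ω N)]
  μ : ∀ N, MeasureTheory.Measure (Ω N)
  [prob : ∀ N, MeasureTheory.IsProbabilityMeasure (μ N)]
  X : ∀ N, (Fin (2 * k) → Fin N) → Ω N → ℂ
  meas : ∀ N i, Measurable (X N i)
  ν : ℕ → MeasureTheory.Measure ℂ
  law : ∀ N i, (μ N).map (X N i) = ν N
  indep : ∀ N, ProbabilityTheory.iIndepFun (X N) (μ N)
  centered : ∀ N, (∫ z : ℂ, z ∂(ν N)) = 0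
  finiteMoments : ∀ N (ℓ : ℕ), MeasureTheory.Integrable (fun z : ℂ => ‖z‖ ^ ℓ) (ν N)
  c_pos : 0 < c
  lim_abs_sq : Tendsto (fun N : ℕ => (N : ℝ) ^ k * ∫ z : ℂ, ‖z‖ ^ 2 ∂(ν N)) atTop (nhds c)
  lim_sq : Tendsto (fun N : ℕ => (N : ℂ) ^ k * ∫ z : ℂ, z ^ 2 ∂(ν N)) atTop (nhds c')
  lim_higher : ∀ ℓ₁ ℓ₂ : ℕ, 2 < ℓ₁ + ℓ₂ →
    Tendsto (fun N : ℕ => (N : ℂ) ^ k * ∫ z : ℂ, z ^ ℓ₁ * (starRingEnd ℂ z) ^ ℓ₂ ∂(ν N))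
      atTop (nhds 0)

instance {k : ℕ} {c : ℝ} {c' : ℂ} (M : TensorModel k c c') (N : ℕ) :
    MeasurableSpace (M.Ω N) := M.mΩ N

instance {k : ℕ} {c : ℝ} {c' : ℂ} (M : TensorModel k c c') (N : ℕ) :
    MeasureTheory.IsProbabilityMeasure (M.μ N) := M.prob N

/-- The flattening `M_{N,σ}` of the random tensor, as a random matrix. -/
def TensorModel.flat {k : ℕ} {c : ℝ} {c' : ℂ} (M : TensorModel k c c') (N : ℕ)
    (σ : Equiv.Perm (Fin (2 * k))) (ω : M.Ω N) :
    Matrix (Fin k → Fin N) (Fin k → Fin N) ℂ :=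
  flatten k N (fun idx => M.X N idx ω) σ

/-- `S_{2,N} = ((2k)!·k!·c)^{-1/2} · Σ_{σ ∈ S_{2k}} sgn(σ)·M_{N,σ}`. -/
def S2 {k : ℕ} {c : ℝ} {c' : ℂ} (M : TensorModel k c c') (N : ℕ) (ω : M.Ω N) :
    Matrix (Fin k → Fin N) (Fin k → Fin N) ℂ :=
  (((Real.sqrt ((((2 * k).factorial * k.factorial : ℕ) : ℝ) * c))⁻¹ : ℝ) : ℂ) •
    ∑ σ : Equiv.Perm (Fin (2 * k)),
      (((Equiv.Perm.sign σ : ℤ) : ℂ)) • M.flat N σ ω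


/-!
Expanding the trace, `Φ_N` is `N^{-k}` times a sum of covariances of entries of `S_{2,N}`,
and since the entries of `M_N` are centered and independent, `E[m_a · conj m_b]` vanishes
unless `a = b`. Gluing row and column indices into one `f ∈ [N]^{2k}`, what survives is the
signed number of pairs `(σ, σ')` with `f ∘ (η' ⊔ η) ∘ σ⁻¹ = f ∘ σ'⁻¹`. For each `σ` this is
`sgn η · sgn η'` times the signed sum over the stabilizer of `f`, which is `1` for injective
`f` and `0` otherwise, so
`Φ_N = sgn η · sgn η' / (k! c) · N^k E|m_N|² · N(N-1)⋯(N-2k+1) / N^{2k}`.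
-/

open MeasureTheory Equiv Equiv.Perm Function

theorem comp_swap_eq_self {α β : Type*} [DecidableEq α] {f : α → β} {a b : α}
    (hab : f a = f b) : f ∘ swap a b = f := by
  rw [comp_swap_eq_update, hab, update_eq_self, ← hab, update_eq_self]

section SignedStabilizer

variable {α β : Type*} [Fintype α] [DecidableEq α] [DecidableEq β]

theorem sum_sign_stabilizer (f : α → β) :
    ∑ ρ : Perm α, (if f ∘ ρ = f then (sign ρ : ℤ) else 0) = if Injective f then 1 else 0 := by
  by_cases hf : Injective f
  · have hstab : ∀ ρ : Perm α, f ∘ ρ = f ↔ ρ = 1 := fun ρ =>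
      ⟨fun h => Equiv.ext fun x => hf (congrFun h x), fun h => by simp [h]⟩
    simp [hstab, hf]
  · obtain ⟨a, b, hfab, hab⟩ : ∃ a b, f a = f b ∧ a ≠ b := by
      simpa [Injective] using hf
    -- right multiplication by a transposition of two points with the same image is a
    -- sign-reversing involution of the stabilizer
    have hswap : ∀ ρ : Perm α, f ∘ ⇑(ρ * swap a b) = f ↔ f ∘ ρ = f := fun ρ => by
      have := ((swap a b).surjective.injective_comp_right.eq_iff :
        (f ∘ ρ) ∘ swap a b = f ∘ swap a b ↔ f ∘ ρ = f)
      rwa [comp_swap_eq_self hfab] at this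
    have hneg : ∀ ρ : Perm α, (if f ∘ ⇑(ρ * swap a b) = f then (sign (ρ * swap a b) : ℤ) else 0)
        = -if f ∘ ρ = f then (sign ρ : ℤ) else 0 := fun ρ => by
      simp only [hswap, Perm.sign_mul, sign_swap hab]
      split_ifs <;> simp
    have hsum : ∑ ρ : Perm α, (if f ∘ ρ = f then (sign ρ : ℤ) else 0)
        = -∑ ρ : Perm α, (if f ∘ ρ = f then (sign ρ : ℤ) else 0) := by
      conv_lhs => rw [← Equiv.sum_comp (Equiv.mulRight (swap a b))]
      rw [← Finset.sum_neg_distrib]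
      exact Finset.sum_congr rfl fun ρ _ => hneg ρ
    rw [if_neg hf]
    omega

theorem sum_sign_mul_sign_ite_comp_eq (f : α → β) (G : Perm α) :
    ∑ σ : Perm α, ∑ σ' : Perm α,
        (if f ∘ G ∘ σ.symm = f ∘ σ'.symm then (sign σ * sign σ' : ℤ) else 0)
      = (Fintype.card α).factorial * sign G * if Injective f then 1 else 0 := by
  have hinner : ∀ σ : Perm α, ∑ σ' : Perm α,
      (if f ∘ G ∘ σ.symm = f ∘ σ'.symm then (sign σ * sign σ' : ℤ) else 0)
        = sign G * if Injective f then 1 else 0 := fun σ => by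
    -- substitute `σ' = σ G⁻¹ ρ⁻¹`, which turns the condition into `f ∘ ρ = f`
    rw [← sum_sign_stabilizer, Finset.mul_sum,
      ← Equiv.sum_comp ((Equiv.inv (Perm α)).trans (Equiv.mulLeft (σ * G⁻¹)))]
    refine Finset.sum_congr rfl fun ρ _ => ?_
    have hcond : f ∘ G ∘ σ.symm = f ∘ (σ * G⁻¹ * ρ⁻¹).symm ↔ f ∘ ρ = f := by
      have := ((G * σ⁻¹).surjective.injective_comp_right.eq_iff :
        (f ∘ ρ) ∘ ⇑(G * σ⁻¹) = f ∘ ⇑(G * σ⁻¹) ↔ f ∘ ρ = f)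
      rw [← this, eq_comm]
      rfl
    have hsign : sign σ * sign (σ * G⁻¹ * ρ⁻¹) = sign G * sign ρ := by
      simp only [Perm.sign_mul, sign_inv, ← mul_assoc, Int.units_mul_self, one_mul]
    show (if f ∘ G ∘ σ.symm = f ∘ (σ * G⁻¹ * ρ⁻¹).symm
      then (sign σ : ℤ) * sign (σ * G⁻¹ * ρ⁻¹) else 0) = _
    rw [if_congr hcond rfl rfl, ← Units.val_mul, hsign, Units.val_mul, mul_ite, mul_zero]
  simp only [hinner, Finset.sum_const, Finset.card_univ, Fintype.card_perm, nsmul_eq_mul]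
  ring

theorem sum_ite_injective [Fintype β] :
    ∑ f : α → β, (if Injective f then 1 else 0 : ℤ)
      = (Fintype.card β).descFactorial (Fintype.card α) := by
  rw [Finset.sum_boole, ← Fintype.card_subtype,
    Fintype.card_congr (Equiv.subtypeInjectiveEquivEmbedding α β), Fintype.card_embedding_eq]

theorem sum_sum_sign_mul_sign_ite_comp_eq [Fintype β] (G : Perm α) :
    ∑ f : α → β, ∑ σ : Perm α, ∑ σ' : Perm α,
        (if f ∘ G ∘ σ.symm = f ∘ σ'.symm then (sign σ * sign σ' : ℤ) else 0)
      = (Fintype.card α).factorial * sign G * (Fintype.card β).descFactorial (Fintype.card α) := by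
  simp only [sum_sign_mul_sign_ite_comp_eq, ← Finset.mul_sum, sum_ite_injective]

end SignedStabilizer

section Glue

variable (k N : ℕ)

theorem glueIdx_finSumEquiv (i j : Fin k → Fin N) (t : Fin k ⊕ Fin k) :
    glueIdx k N i j (finSumEquiv k t) = Sum.elim i j t := by
  cases t <;> simp [glueIdx, finSumEquiv]

theorem glueIdx_eq_sumElim_comp (i j : Fin k → Fin N) :
    glueIdx k N i j = Sum.elim i j ∘ (finSumEquiv k).symm := by
  funext s
  obtain ⟨t, rfl⟩ := (finSumEquiv k).surjective s
  rw [glueIdx_finSumEquiv, Function.comp_apply, symm_apply_apply]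

def glueEquiv : ((Fin k → Fin N) × (Fin k → Fin N)) ≃ (Fin (2 * k) → Fin N) :=
  (Equiv.sumArrowEquivProdArrow _ _ _).symm.trans ((finSumEquiv k).arrowCongr (Equiv.refl _))

theorem glueEquiv_apply (x : (Fin k → Fin N) × (Fin k → Fin N)) :
    glueEquiv k N x = glueIdx k N x.1 x.2 := by
  rw [glueIdx_eq_sumElim_comp]
  rfl

theorem sum_sum_glueIdx {R : Type*} [AddCommMonoid R] (F : (Fin (2 * k) → Fin N) → R) :
    ∑ i, ∑ j, F (glueIdx k N i j) = ∑ f, F f := by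
  rw [← (glueEquiv k N).sum_comp, Fintype.sum_prod_type]
  simp only [glueEquiv_apply]

variable {k N}

theorem glueIdx_comp (i j : Fin k → Fin N) (a b : Perm (Fin k)) :
    glueIdx k N (i ∘ a) (j ∘ b) = glueIdx k N i j ∘ gluePerm k a b := by
  funext s
  simp only [glueIdx_eq_sumElim_comp, gluePerm, Function.comp_apply, permCongr_apply,
    symm_apply_apply, Equiv.sumCongr_apply]
  cases (finSumEquiv k).symm s <;> rfl

theorem sign_gluePerm (a b : Perm (Fin k)) : sign (gluePerm k a b) = sign a * sign b := by
  rw [gluePerm, sign_permCongr, sign_sumCongr]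

theorem sum_sign_mul_sign_ite_glueIdx (η η' : Perm (Fin k)) :
    ∑ p : Fin k → Fin N, ∑ l : Fin k → Fin N, ∑ σ : Perm (Fin (2 * k)), ∑ σ' : Perm (Fin (2 * k)),
        (if glueIdx k N (p ∘ η') (l ∘ η) ∘ σ.symm = glueIdx k N p l ∘ σ'.symm
          then (sign σ * sign σ' : ℤ) else 0)
      = (2 * k).factorial * (sign η * sign η' : ℤ) * N.descFactorial (2 * k) := by
  calc _ = ∑ f : Fin (2 * k) → Fin N, ∑ σ : Perm (Fin (2 * k)), ∑ σ' : Perm (Fin (2 * k)),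
        (if f ∘ gluePerm k η' η ∘ σ.symm = f ∘ σ'.symm then (sign σ * sign σ' : ℤ) else 0) := by
        rw [← sum_sum_glueIdx]
        simp only [glueIdx_comp]
        rfl
    _ = _ := by
        rw [sum_sum_sign_mul_sign_ite_comp_eq, sign_gluePerm, Fintype.card_fin, Fintype.card_fin]
        push_cast
        ring

end Glue

section Umat

variable {k N : ℕ}

theorem Umat_apply (η : Perm (Fin k)) (i j : Fin k → Fin N) :
    Umat k N η i j = if i = j ∘ η then 1 else 0 := by
  simp only [Umat, funext_iff, Function.comp_apply]

theorem mul_Umat_apply (A : Matrix (Fin k → Fin N) (Fin k → Fin N) ℂ) (η : Perm (Fin k))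
    (i j : Fin k → Fin N) : (A * Umat k N η) i j = A i (j ∘ η) := by
  simp [Matrix.mul_apply, Umat_apply]

theorem trace_mul_conjTranspose_Umat (A : Matrix (Fin k → Fin N) (Fin k → Fin N) ℂ)
    (η : Perm (Fin k)) : (A * (Umat k N η)ᴴ).trace = ∑ p, A (p ∘ η) p := by
  simp only [Matrix.trace, Matrix.diag, Matrix.mul_apply, Matrix.conjTranspose_apply, Umat_apply]
  rw [Finset.sum_comm]
  simp

theorem trace_mul_Umat_mul_mul_conjTranspose_Umat
    (A B : Matrix (Fin k → Fin N) (Fin k → Fin N) ℂ) (η η' : Perm (Fin k)) :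
    (A * Umat k N η * B * (Umat k N η')ᴴ).trace = ∑ p, ∑ l, A (p ∘ η') (l ∘ η) * B l p := by
  simp only [trace_mul_conjTranspose_Umat, Matrix.mul_apply (M := A * Umat k N η), mul_Umat_apply]

end Umat

theorem sum_mul_conj_sum {R ι κ : Type*} [CommSemiring R] [StarRing R] [Fintype ι] [Fintype κ]
    (u x : ι → R) (v y : κ → R) :
    (∑ i, u i * x i) * starRingEnd R (∑ j, v j * y j)
      = ∑ i, ∑ j, u i * starRingEnd R (v j) * (x i * starRingEnd R (y j)) := by
  simp only [map_sum, map_mul, Finset.sum_mul_sum]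
  exact Finset.sum_congr rfl fun i _ => Finset.sum_congr rfl fun j _ => by ring

namespace TensorModel

variable {k : ℕ} {c : ℝ} {c' : ℂ} (M : TensorModel k c c') (N : ℕ)

theorem integral_comp_X {E : Type*} [NormedAddCommGroup E] [NormedSpace ℝ E]
    (a : Fin (2 * k) → Fin N) {f : ℂ → E} (hf : AEStronglyMeasurable f (M.ν N)) :
    ∫ ω, f (M.X N a ω) ∂(M.μ N) = ∫ z, f z ∂(M.ν N) := by
  rw [← M.law N a] at hf ⊢
  exact (integral_map (M.meas N a).aemeasurable hf).symm

theorem integral_X (a : Fin (2 * k) → Fin N) : ∫ ω, M.X N a ω ∂(M.μ N) = 0 :=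
  (M.integral_comp_X N a aestronglyMeasurable_id).trans (M.centered N)

theorem memLp_X (a : Fin (2 * k) → Fin N) : MemLp (M.X N a) 2 (M.μ N) := by
  have hmeas := (M.meas N a).aestronglyMeasurable (μ := M.μ N)
  rw [memLp_two_iff_integrable_sq_norm hmeas]
  have h := M.finiteMoments N 2
  rw [← M.law N a] at h
  exact (integrable_map_measure (by fun_prop) (M.meas N a).aemeasurable).mp h

theorem integrable_mul_conj_X (a b : Fin (2 * k) → Fin N) :
    Integrable (fun ω => M.X N a ω * starRingEnd ℂ (M.X N b ω)) (M.μ N) :=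
  (M.memLp_X N a).integrable_mul (M.memLp_X N b).star

theorem integral_mul_conj_X (a b : Fin (2 * k) → Fin N) :
    ∫ ω, M.X N a ω * starRingEnd ℂ (M.X N b ω) ∂(M.μ N)
      = if a = b then ((∫ z, ‖z‖ ^ 2 ∂(M.ν N) : ℝ) : ℂ) else 0 := by
  split_ifs with hab
  · subst hab
    simp_rw [Complex.mul_conj, Complex.normSq_eq_norm_sq]
    rw [M.integral_comp_X N a (f := fun z => ((‖z‖ ^ 2 : ℝ) : ℂ)) (by fun_prop),
      integral_complex_ofReal]
  · have hind := ((M.indep N).indepFun hab).integral_fun_comp_mul_comp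
      (M.meas N a).aemeasurable (M.meas N b).aemeasurable (f := id) (g := starRingEnd ℂ)
      (by fun_prop) (by fun_prop)
    simp only [id] at hind
    rw [hind, M.integral_X, zero_mul]

variable {ι κ : Type*} [Fintype ι] [Fintype κ] (u : ι → ℂ) (v : κ → ℂ)
  (a : ι → Fin (2 * k) → Fin N) (b : κ → Fin (2 * k) → Fin N)

theorem integrable_sum_mul_conj_sum :
    Integrable (fun ω => (∑ i, u i * M.X N (a i) ω) *
      starRingEnd ℂ (∑ j, v j * M.X N (b j) ω)) (M.μ N) := by
  simp only [sum_mul_conj_sum]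
  exact integrable_finsetSum _ fun i _ => integrable_finsetSum _ fun j _ =>
    (M.integrable_mul_conj_X N (a i) (b j)).const_mul _

theorem integral_sum_mul_conj_sum :
    ∫ ω, (∑ i, u i * M.X N (a i) ω) * starRingEnd ℂ (∑ j, v j * M.X N (b j) ω) ∂(M.μ N)
      = ((∫ z, ‖z‖ ^ 2 ∂(M.ν N) : ℝ) : ℂ) *
          ∑ i, ∑ j, if a i = b j then u i * starRingEnd ℂ (v j) else 0 := by
  simp only [sum_mul_conj_sum]
  rw [integral_finsetSum _ fun i _ => integrable_finsetSum _ fun j _ =>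
    (M.integrable_mul_conj_X N (a i) (b j)).const_mul _, Finset.mul_sum]
  refine Finset.sum_congr rfl fun i _ => ?_
  rw [integral_finsetSum _ fun j _ => (M.integrable_mul_conj_X N (a i) (b j)).const_mul _,
    Finset.mul_sum]
  refine Finset.sum_congr rfl fun j _ => ?_
  rw [integral_const_mul, M.integral_mul_conj_X]
  split_ifs <;> simp [mul_comm]

end TensorModel

def s2Scale (k : ℕ) (c : ℝ) : ℝ :=
  (Real.sqrt ((((2 * k).factorial * k.factorial : ℕ) : ℝ) * c))⁻¹

theorem s2Scale_sq {k : ℕ} {c : ℝ} (hc : 0 ≤ c) :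
    s2Scale k c ^ 2 = ((((2 * k).factorial * k.factorial : ℕ) : ℝ) * c)⁻¹ := by
  rw [s2Scale, inv_pow, Real.sq_sqrt (by positivity)]

section S2

variable {k : ℕ} {c : ℝ} {c' : ℂ} (M : TensorModel k c c') (N : ℕ)

theorem S2_apply (ω : M.Ω N) (i j : Fin k → Fin N) :
    S2 M N ω i j = ∑ σ : Perm (Fin (2 * k)),
      (s2Scale k c * sign σ : ℂ) * M.X N (glueIdx k N i j ∘ σ.symm) ω := by
  simp only [S2, Matrix.smul_apply, Matrix.sum_apply, smul_eq_mul, Finset.mul_sum, mul_assoc]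
  rfl

theorem integrable_S2_mul_conj_S2 (i j i' j' : Fin k → Fin N) :
    Integrable (fun ω => S2 M N ω i j * starRingEnd ℂ (S2 M N ω i' j')) (M.μ N) := by
  simp only [S2_apply]
  exact M.integrable_sum_mul_conj_sum N _ _ _ _

theorem integral_S2_mul_conj_S2 (i j i' j' : Fin k → Fin N) :
    ∫ ω, S2 M N ω i j * starRingEnd ℂ (S2 M N ω i' j') ∂(M.μ N)
      = ((s2Scale k c ^ 2 * ∫ z, ‖z‖ ^ 2 ∂(M.ν N) : ℝ) : ℂ) *
        ((∑ σ : Perm (Fin (2 * k)), ∑ σ' : Perm (Fin (2 * k)),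
          if glueIdx k N i j ∘ σ.symm = glueIdx k N i' j' ∘ σ'.symm
            then (sign σ * sign σ' : ℤ) else 0 : ℤ) : ℂ) := by
  simp only [S2_apply, M.integral_sum_mul_conj_sum, map_mul, Complex.conj_ofReal, map_intCast]
  push_cast
  simp only [Finset.mul_sum, mul_ite, mul_zero]
  refine Finset.sum_congr rfl fun σ _ => Finset.sum_congr rfl fun σ' _ => ?_
  split_ifs <;> ring

theorem Phi_S2_mul_Umat_mul_conjTranspose (η η' : Perm (Fin k)) :
    Phi k N (M.μ N) (fun ω => S2 M N ω * Umat k N η * (S2 M N ω)ᴴ * (Umat k N η')ᴴ)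
      = ((N : ℂ) ^ k)⁻¹ * ((s2Scale k c ^ 2 * ∫ z, ‖z‖ ^ 2 ∂(M.ν N) : ℝ) : ℂ) *
        ((2 * k).factorial * (sign η * sign η' : ℤ) * N.descFactorial (2 * k)) := by
  simp only [Phi, trace_mul_Umat_mul_mul_conjTranspose_Umat, Matrix.conjTranspose_apply,
    ← starRingEnd_apply]
  rw [integral_const_mul, integral_finsetSum _ fun p _ => integrable_finsetSum _ fun l _ =>
    integrable_S2_mul_conj_S2 M N _ _ _ _]
  simp only [integral_finsetSum _ fun l _ => integrable_S2_mul_conj_S2 M N _ _ _ _,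
    integral_S2_mul_conj_S2, ← Finset.mul_sum, ← Int.cast_sum, sum_sign_mul_sign_ite_glueIdx]
  push_cast
  ring

end S2

theorem tendsto_descFactorial_div_pow (n : ℕ) :
    Tendsto (fun N : ℕ => (N.descFactorial n : ℝ) / (N : ℝ) ^ n) atTop (nhds 1) := by
  refine (Asymptotics.isEquivalent_iff_tendsto_one ?_).mp (isEquivalent_descFactorial n)
  filter_upwards [eventually_ne_atTop 0] with N hN
  positivity

theorem covariance_S2_general (k : ℕ) (c : ℝ) (c' : ℂ) (M : TensorModel k c c')
    (η η' : Equiv.Perm (Fin k)) :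
    Tendsto (fun N : ℕ =>
        Phi k N (M.μ N) (fun ω =>
          S2 M N ω * Umat k N η * (S2 M N ω)ᴴ * (Umat k N η')ᴴ))
      atTop (nhds ((((Equiv.Perm.sign η : ℤ) : ℂ) * ((Equiv.Perm.sign η' : ℤ) : ℂ)) /
        (k.factorial : ℂ))) := by
  set s : ℂ := ((sign η : ℤ) : ℂ) * ((sign η' : ℤ) : ℂ) / (k.factorial : ℂ)
  set r : ℕ → ℝ := fun N => (N : ℝ) ^ k * (∫ z, ‖z‖ ^ 2 ∂(M.ν N)) / c *
    ((N.descFactorial (2 * k) : ℝ) / (N : ℝ) ^ (2 * k))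
  have hr : Tendsto r atTop (nhds 1) := by
    simpa [M.c_pos.ne'] using
      (M.lim_abs_sq.div_const c).mul (tendsto_descFactorial_div_pow (2 * k))
  have hΦ : ∀ᶠ N in atTop, ((r N : ℝ) : ℂ) * s
      = Phi k N (M.μ N) (fun ω => S2 M N ω * Umat k N η * (S2 M N ω)ᴴ * (Umat k N η')ᴴ) := by
    filter_upwards [eventually_ne_atTop 0] with N hN0
    have hN : (N : ℂ) ≠ 0 := Nat.cast_ne_zero.mpr hN0
    have hc : (c : ℂ) ≠ 0 := Complex.ofReal_ne_zero.mpr M.c_pos.ne'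
    have hfac : ((2 * k).factorial : ℂ) ≠ 0 := Nat.cast_ne_zero.mpr (Nat.factorial_ne_zero _)
    rw [Phi_S2_mul_Umat_mul_conjTranspose, s2Scale_sq M.c_pos.le]
    simp only [r, s]
    push_cast
    field_simp
    ring
  simpa using (((Complex.continuous_ofReal.tendsto 1).comp hr).mul_const s).congr' hΦ

/-- For a random tensor satisfying Hypothesis (TensorModel) with parameter
`(c, c')`, for all `η, η' ∈ S_k`, `Φ_N(S_{2,N}·U_{N,η}·S_{2,N}^*·U_{N,η'}^*)` converges to
`sgn(η)·sgn(η')/k!` as `N → ∞`. -/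
theorem covariance_S2 (k : ℕ) (hk : 1 ≤ k) (c : ℝ) (c' : ℂ) (M : TensorModel k c c')
    (η η' : Equiv.Perm (Fin k)) :
    Tendsto (fun N : ℕ =>
        Phi k N (M.μ N) (fun ω =>
          S2 M N ω * Umat k N η * (S2 M N ω)ᴴ * (Umat k N η')ᴴ))
      atTop (nhds ((((Equiv.Perm.sign η : ℤ) : ℂ) * ((Equiv.Perm.sign η' : ℤ) : ℂ)) /
        (k.factorial : ℂ))) :=
  covariance_S2_general k c c' M η η'
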